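/- Let m, n ≥ 1, let A be a real m×n matrix and d ∈ ℝ^m. Define x₀(j) = min over i of (d(i) − A(i,j)) and Δ = (1/2)·max over i of (d(i) − (A ⊙ x₀)(i)). Then for every x ∈ ℝ^n satisfying A ⊙ x ≥ d componentwise, the Chebyshev distance satisfies max over i of |(A ⊙ x)(i) − d(i)| ≥ 2Δ, and equality holds at the vector x given by x(j) = 2Δ + x₀(j). That is, the minimum Chebyshev distance from d to the set {A ⊙ x : x ∈ ℝ^n, A ⊙ x ≥ d} equals 2Δ, attained at 2Δ + x₀. -/
import Mathlib


/-- Max-plus (tropical) matrix–vector product: `(A ⊙ x) i = max_j (A i j + x j)`. -/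
noncomputable def mpMul {m n : ℕ} (A : Matrix (Fin m) (Fin n) ℝ) (x : Fin n → ℝ) :
    Fin m → ℝ :=
  fun i => ⨆ j, A i j + x j

/-- The principal vector `x₀ j = min_i (d i - A i j)`. -/
noncomputable def principal {m n : ℕ} (A : Matrix (Fin m) (Fin n) ℝ) (d : Fin m → ℝ) :
    Fin n → ℝ :=
  fun j => ⨅ i, d i - A i j

/-- The tropResidual `Δ = (1/2) · max_i (d i - (A ⊙ x₀) i)`. -/
noncomputable def tropResidual {m n : ℕ} (A : Matrix (Fin m) (Fin n) ℝ) (d : Fin m → ℝ) : ℝ :=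
  (1 / 2) * ⨆ i, (d i - mpMul A (principal A d) i)

/-- Chebyshev distance between two vectors. -/
noncomputable def chebDist {m : ℕ} (u v : Fin m → ℝ) : ℝ := ⨆ i, |u i - v i|

/-- `d` lies in the tropical span of the family `{a j : j ∈ I}`. -/
def InTropSpan {m n : ℕ} (a : Fin n → Fin m → ℝ) (I : Finset (Fin n)) (d : Fin m → ℝ) :
    Prop :=
  I.Nonempty ∧ ∃ x : Fin n → ℝ, ∀ i, d i = ⨆ j : I, (x j.1 + a j.1 i)

/-- `{a j : j ∈ I}` is a minimal generating system for `d`. -/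
def MinGen {m n : ℕ} (a : Fin n → Fin m → ℝ) (I : Finset (Fin n)) (d : Fin m → ℝ) : Prop :=
  InTropSpan a I d ∧ ∀ I' ⊂ I, ¬ InTropSpan a I' d

/-- Residual of `d` with respect to the subfamily `{a j : j ∈ I}`. -/
noncomputable def resOn {m n : ℕ} (a : Fin n → Fin m → ℝ) (I : Finset (Fin n))
    (d : Fin m → ℝ) : ℝ :=
  (1 / 2) * ⨆ k, (d k - ⨆ j : I, (a j.1 k + ⨅ i, (d i - a j.1 i)))

private lemma fin_le_sup {k : ℕ} (f : Fin k → ℝ) (i : Fin k) : f i ≤ ⨆ j, f j :=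
  le_ciSup (Finite.bddAbove_range f) i

private lemma fin_sup_le {k : ℕ} [Nonempty (Fin k)] (f : Fin k → ℝ) (a : ℝ)
    (h : ∀ i, f i ≤ a) : (⨆ j, f j) ≤ a := ciSup_le h

private lemma fin_inf_le {k : ℕ} (f : Fin k → ℝ) (i : Fin k) : (⨅ j, f j) ≤ f i :=
  ciInf_le (Finite.bddBelow_range f) i

private lemma fin_le_inf {k : ℕ} [Nonempty (Fin k)] (f : Fin k → ℝ) (a : ℝ)
    (h : ∀ i, a ≤ f i) : a ≤ ⨅ j, f j := le_ciInf h

private lemma le_mpMul' {m n : ℕ} (A : Matrix (Fin m) (Fin n) ℝ) (x : Fin n → ℝ)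
    (i : Fin m) (j : Fin n) : A i j + x j ≤ mpMul A x i := by simp only [mpMul]; exact fin_le_sup (fun j => A i j + x j) j

private lemma mpMul_le' {m n : ℕ} [Nonempty (Fin n)] (A : Matrix (Fin m) (Fin n) ℝ)
    (x : Fin n → ℝ) (i : Fin m) (a : ℝ) (h : ∀ j, A i j + x j ≤ a) :
    mpMul A x i ≤ a := by simp only [mpMul]; exact fin_sup_le (fun j => A i j + x j) a h

/-- the minimum Chebyshev distance from `d` to the set
`{A ⊙ x : A ⊙ x ≥ d}` equals `2Δ`, attained at `2Δ + x₀`. -/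
theorem stmt4 (m n : ℕ) (hm : 1 ≤ m) (hn : 1 ≤ n)
    (A : Matrix (Fin m) (Fin n) ℝ) (d : Fin m → ℝ) :
    (∀ x : Fin n → ℝ, (∀ i, d i ≤ mpMul A x i) →
        2 * tropResidual A d ≤ chebDist (mpMul A x) d) ∧
      (∀ i, d i ≤ mpMul A (fun j => 2 * tropResidual A d + principal A d j) i) ∧
      chebDist (mpMul A (fun j => 2 * tropResidual A d + principal A d j)) d
        = 2 * tropResidual A d := by
  haveI hM : Nonempty (Fin m) := ⟨⟨0, hm⟩⟩
  haveI hN : Nonempty (Fin n) := ⟨⟨0, hn⟩⟩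
  set x₀ := principal A d with hx0
  set S := ⨆ i, (d i - mpMul A x₀ i) with hSdef
  have hTS : 2 * tropResidual A d = S := by
    simp only [tropResidual, hSdef, hx0]; ring
  have hx0le : ∀ i j, x₀ j ≤ d i - A i j := fun i j => fin_inf_le _ i
  have h1 : ∀ i, mpMul A x₀ i ≤ d i := fun i =>
    mpMul_le' A x₀ i (d i) fun j => by have := hx0le i j; linarith
  have hSt : ∀ i, d i - mpMul A x₀ i ≤ S := fun i =>
    fin_le_sup (fun i => d i - mpMul A x₀ i) i
  have hS0 : 0 ≤ S := le_trans
    (by have := h1 (Classical.arbitrary (Fin m)); linarith) (hSt _)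
  have hshift : ∀ i, mpMul A (fun j => S + x₀ j) i = S + mpMul A x₀ i := by
    intro i
    apply le_antisymm
    · exact mpMul_le' A _ i _ fun j => by have := le_mpMul' A x₀ i j; linarith
    · obtain ⟨j0, hj0⟩ := Finite.exists_max fun j => A i j + x₀ j
      have h2 : mpMul A x₀ i = A i j0 + x₀ j0 :=
        le_antisymm (mpMul_le' A x₀ i _ hj0) (le_mpMul' A x₀ i j0)
      have := le_mpMul' A (fun j => S + x₀ j) i j0
      linarith
  have hattain : ∃ i, mpMul A x₀ i = d i := by
    obtain ⟨j⟩ := hN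
    obtain ⟨i0, hi0⟩ := Finite.exists_min fun i => d i - A i j
    have hx0j : x₀ j = d i0 - A i0 j :=
      le_antisymm (hx0le i0 j) (fin_le_inf _ _ hi0)
    refine ⟨i0, le_antisymm (h1 i0) ?_⟩
    have := le_mpMul' A x₀ i0 j
    linarith
  refine ⟨?_, ?_, ?_⟩
  · intro x hx
    rw [hTS]
    set r := chebDist (mpMul A x) d with hr
    have hrge : ∀ i, mpMul A x i - d i ≤ r := by
      intro i
      have h := fin_le_sup (fun i => |mpMul A x i - d i|) i
      calc mpMul A x i - d i ≤ |mpMul A x i - d i| := le_abs_self _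
        _ ≤ r := h
    have hxle : ∀ j, x j - r ≤ x₀ j := by
      intro j
      apply fin_le_inf
      intro i
      have h3 := le_mpMul' A x i j
      have := hrge i
      linarith
    rw [hSdef]
    apply fin_sup_le
    intro i
    have h4 : mpMul A x i ≤ mpMul A x₀ i + r :=
      mpMul_le' A x i _ fun j => by
        have := le_mpMul' A x₀ i j
        have := hxle j
        linarith
    have := hx i
    linarith
  · intro i
    rw [hTS, hshift i]
    have := hSt i
    linarith
  · rw [hTS]
    apply le_antisymm
    · apply fin_sup_le
      intro i
      rw [hshift i]
      have h5 := hSt i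
      have h6 := h1 i
      rw [abs_le]
      constructor <;> linarith
    · obtain ⟨i0, hi0⟩ := hattain
      have h := fin_le_sup (fun i => |mpMul A (fun j => S + x₀ j) i - d i|) i0
      simp only [hshift i0, hi0] at h
      calc S = |S + d i0 - d i0| := by rw [abs_of_nonneg] <;> [ring; linarith]
        _ ≤ _ := h
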